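/- arXiv:2307.06299 — 3 statements merged into one kernel-verified Lean document; each statement's English description precedes it below -/
import Mathlib

section
/- Let A be an m×n real matrix and l, u ∈ ℝⁿ with l ≤ u componentwise. Exactly one of the following holds: (1) there exists x ∈ ℝⁿ with A·x = 0 and l ≤ x ≤ u; or (2) there exists w ∈ ℝᵐ such that for all x with l ≤ x ≤ u, wᵀ·A·x < 0. -/
open Matrix

theorem farkas_dichotomy (m n : ℕ) (A : Matrix (Fin m) (Fin n) ℝ)
    (l u : Fin n → ℝ) (hlu : l ≤ u) :
    Xor' (∃ x : Fin n → ℝ, A.mulVec x = 0 ∧ l ≤ x ∧ x ≤ u)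
         (∃ w : Fin m → ℝ, ∀ x : Fin n → ℝ, l ≤ x → x ≤ u → w ⬝ᵥ A.mulVec x < 0) := by
  by_cases hP : ∃ x : Fin n → ℝ, A.mulVec x = 0 ∧ l ≤ x ∧ x ≤ u
  · left
    refine ⟨hP, ?_⟩
    rintro ⟨w, hw⟩
    obtain ⟨x, hx0, hxl, hxu⟩ := hP
    have := hw x hxl hxu
    rw [hx0] at this
    simp at this
  · right
    refine ⟨?_, hP⟩
    set S : Set (Fin m → ℝ) := A.mulVec '' Set.Icc l u with hS
    have hSconv : Convex ℝ S := (convex_Icc l u).linear_image A.mulVecLin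
    have hScomp : IsCompact S :=
      (isCompact_Icc).image A.mulVecLin.continuous_of_finiteDimensional
    have hSclosed : IsClosed S := hScomp.isClosed
    have h0 : (0 : Fin m → ℝ) ∉ S := by
      rintro ⟨x, hx, hx0⟩
      exact hP ⟨x, hx0, hx.1, hx.2⟩
    obtain ⟨f, c, hc0, hcS⟩ := geometric_hahn_banach_point_closed hSconv hSclosed h0
    have hfc : (0:ℝ) < c := by simpa using hc0
    refine ⟨fun i => -(f (Pi.single i 1)), fun x hxl hxu => ?_⟩
    have hmem : A.mulVec x ∈ S := ⟨x, ⟨hxl, hxu⟩, rfl⟩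
    have hfx := hcS _ hmem
    set y := A.mulVec x with hy
    have hysum : y = ∑ i, y i • (Pi.single i 1 : Fin m → ℝ) := by
      funext j
      simp [Finset.sum_apply, Pi.single_apply, mul_ite]
    have key : (fun i => -(f (Pi.single i 1))) ⬝ᵥ y = -(f y) := by
      conv_rhs => rw [hysum]
      rw [map_sum, dotProduct, ← Finset.sum_neg_distrib]
      refine Finset.sum_congr rfl fun i _ => ?_
      simp [mul_comm]
    rw [key]
    linarith
end

section
/- Let A be an m×n real matrix, w ∈ ℝᵐ, and l, u ∈ ℝⁿ. If Σⱼ (if (wᵀA)ⱼ < 0 then lⱼ·(wᵀA)ⱼ else uⱼ·(wᵀA)ⱼ) < 0, then there is no x ∈ ℝⁿ with A·x = 0 and l ≤ x ≤ u. -/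
theorem check_contradiction_correct (m n : ℕ) (A : Matrix (Fin m) (Fin n) ℝ)
    (w : Fin m → ℝ) (l u : Fin n → ℝ)
    (h : ∑ j : Fin n,
        (if A.vecMul w j < 0 then l j * A.vecMul w j else u j * A.vecMul w j) < 0) :
    ¬ ∃ x : Fin n → ℝ, A.mulVec x = 0 ∧ l ≤ x ∧ x ≤ u := by
  rintro ⟨x, hx, hl, hu⟩
  have hz : ∑ j : Fin n, x j * A.vecMul w j = 0 := by
    have := Matrix.dotProduct_mulVec w A x
    simp [dotProduct, hx, mul_comm] at this ⊢
    exact this.symm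
  have hle : ∑ j : Fin n, x j * A.vecMul w j ≤
      ∑ j : Fin n, (if A.vecMul w j < 0 then l j * A.vecMul w j else u j * A.vecMul w j) := by
    apply Finset.sum_le_sum
    intro j _
    by_cases hc : A.vecMul w j < 0
    · rw [if_pos hc]
      exact mul_le_mul_of_nonpos_right (hl j) hc.le
    · rw [if_neg hc]
      exact mul_le_mul_of_nonneg_right (hu j) (not_lt.mp hc)
  linarith
end

section
/- Let A be an m×n real matrix, w ∈ ℝᵐ, and suppose the row vector c = wᵀ·A satisfies cᵢ = −1 for some index i. Then for all x with A·x = 0, xᵢ = Σ_{j≠i} cⱼ·xⱼ. Consequently, if l ≤ x ≤ u, then xᵢ ≤ Σ_{j≠i} (if cⱼ < 0 then lⱼ·cⱼ else uⱼ·cⱼ). -/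
theorem farkas_vector_bound (m n : ℕ) (A : Matrix (Fin m) (Fin n) ℝ)
    (w : Fin m → ℝ) (l u : Fin n → ℝ) (i : Fin n)
    (hc : A.vecMul w i = -1) :
    (∀ x : Fin n → ℝ, A.mulVec x = 0 →
        x i = ∑ j ∈ Finset.univ.erase i, A.vecMul w j * x j) ∧
    (∀ x : Fin n → ℝ, A.mulVec x = 0 → l ≤ x → x ≤ u →
        x i ≤ ∑ j ∈ Finset.univ.erase i,
          (if A.vecMul w j < 0 then l j * A.vecMul w j else u j * A.vecMul w j)) := by
  have key : ∀ x : Fin n → ℝ, A.mulVec x = 0 →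
      x i = ∑ j ∈ Finset.univ.erase i, A.vecMul w j * x j := by
    intro x hx
    have h0 : ∑ j, A.vecMul w j * x j = 0 := by
      have h1 : dotProduct (A.vecMul w) x = 0 := by
        rw [← Matrix.dotProduct_mulVec, hx, dotProduct_zero]
      simpa [dotProduct] using h1
    have hsplit : A.vecMul w i * x i + ∑ j ∈ Finset.univ.erase i, A.vecMul w j * x j
        = ∑ j, A.vecMul w j * x j :=
      Finset.add_sum_erase Finset.univ (fun j => A.vecMul w j * x j) (Finset.mem_univ i)
    rw [h0, hc] at hsplit
    linarith
  refine ⟨key, fun x hx hl hu => ?_⟩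
  rw [key x hx]
  apply Finset.sum_le_sum
  intro j _
  by_cases h : A.vecMul w j < 0
  · simp only [h, if_true]
    rw [mul_comm]
    exact mul_le_mul_of_nonpos_right (hl j) h.le
  · simp only [h, if_false]
    rw [mul_comm]
    exact mul_le_mul_of_nonneg_right (hu j) (not_lt.mp h)
end
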